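/- arXiv:1710.11479 — 2 statements merged into one kernel-verified Lean document; each statement's English description precedes it below -/
import Mathlib

section
/- Let λ: G_m^n → G_m^n be an isogeny of the complex algebraic torus (i.e., a surjective group homomorphism with finite kernel), and let T ⊂ G_m^n be a subtorus. Then the following are equivalent: (1) there exists a subtorus T' ⊂ G_m^n such that λ restricts to an isomorphism T' → T; (2) the preimage λ^{-1}(T) is a disjoint union of deg(λ) distinct torsion cosets of a subtorus. -/
/-!
If `λ` maps a subtorus `T'` isomorphically onto `T`, then `λ⁻¹(T) = ker λ · T'` is the disjoint
union of the `|ker λ|` cosets `ζ T'`, `ζ ∈ ker λ`, and these are torsion cosets because `ker λ`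
is killed by `det`.

Conversely, subtori are divisible, and a coset of a divisible group covered by finitely many
cosets lies in one of them: by Neumann's lemma one of the covering subgroups has finite index,
hence is everything. Covering `T` by the images of the given torsion cosets produces one of their
subtori `T'` with `λ(T') = T`; covering the cosets of `T'` shows that each given coset contains a
coset `k T'` with `k ∈ ker λ`. Distinct pieces give distinct cosets `k T'`, so there are `|ker λ|`
of them, which forces `ker λ ∩ T' = 1`.
-/

/-- The monomial (algebraic) group homomorphism `G_m^k → G_m^n` attached to an integer
matrix `A`. -/
noncomputable def monomialHom {n k : ℕ} (A : Matrix (Fin n) (Fin k) ℤ) :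
    (Fin k → ℂˣ) →* (Fin n → ℂˣ) where
  toFun t := fun i => ∏ j, t j ^ A i j
  map_one' := by funext i; simp
  map_mul' x y := by funext i; simp [mul_zpow, Finset.prod_mul_distrib]

/-- A subgroup of `(ℂ^×)^n` is a subtorus if it is the image of some monomial map. -/
def IsSubtorus {n : ℕ} (T : Subgroup (Fin n → ℂˣ)) : Prop :=
  ∃ (k : ℕ) (A : Matrix (Fin n) (Fin k) ℤ), T = (monomialHom A).range

/-- A torsion coset: a translate of a subtorus by a torsion point. -/
def IsTorsionCoset {n : ℕ} (s : Set (Fin n → ℂˣ)) : Prop :=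
  ∃ (ζ : Fin n → ℂˣ) (T : Subgroup (Fin n → ℂˣ)), IsSubtorus T ∧
    (∃ k : ℕ, 0 < k ∧ ζ ^ k = 1) ∧ s = (fun x => ζ * x) '' (T : Set (Fin n → ℂˣ))

open scoped Pointwise

section Cosets

variable {G : Type*} [Group G]

theorem Subgroup.smul_coe_eq_of_mem_smul {H : Subgroup G} {a b : G} (h : a ∈ b • (H : Set G)) :
    a • (H : Set G) = b • (H : Set G) := by
  rw [leftCoset_eq_iff, ← H.inv_mem_iff, mul_inv_rev, inv_inv]
  exact (mem_leftCoset_iff b).mp h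

theorem Subgroup.disjoint_smul_coe_of_ne {H : Subgroup G} {a b : G}
    (h : a • (H : Set G) ≠ b • (H : Set G)) : Disjoint (a • (H : Set G)) (b • (H : Set G)) :=
  Set.disjoint_left.mpr fun _ ha hb =>
    h ((smul_coe_eq_of_mem_smul ha).symm.trans (smul_coe_eq_of_mem_smul hb))

theorem Subgroup.le_of_smul_coe_subset {S H : Subgroup G} {b : G} (h : b • (S : Set G) ⊆ H) :
    S ≤ H := fun s hs => by
  have hb : b ∈ H := h (mem_own_leftCoset S.toSubmonoid b)
  simpa using H.mul_mem (H.inv_mem hb) (h ⟨s, hs, rfl⟩)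

theorem Subgroup.injOn_smul_coe_iff_disjoint {K T : Subgroup G} :
    Set.InjOn (· • (T : Set G)) (K : Set G) ↔ Disjoint K T := by
  rw [Subgroup.disjoint_def]
  constructor
  · intro h x hxK hxT
    exact h hxK K.one_mem (by simp [leftCoset_mem_leftCoset T hxT])
  · intro h k hk k' hk' hkk'
    have := h (K.mul_mem (K.inv_mem hk) hk') ((leftCoset_eq_iff T).mp hkk')
    rwa [inv_mul_eq_one] at this

theorem MonoidHom.preimage_image_eq_iUnion_smul {G' : Type*} [Group G'] (f : G →* G')
    (H : Subgroup G) : f ⁻¹' (f '' H) = ⋃ k ∈ f.ker, k • (H : Set G) := by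
  ext x
  simp only [Set.mem_preimage, Set.mem_image, SetLike.mem_coe, Set.mem_iUnion, mem_leftCoset_iff,
    exists_prop, MonoidHom.mem_ker]
  constructor
  · rintro ⟨t, ht, hft⟩
    exact ⟨x * t⁻¹, by simp [hft], by simpa using ht⟩
  · rintro ⟨k, hk, hkx⟩
    exact ⟨k⁻¹ * x, hkx, by simp [hk]⟩

theorem MonoidHom.exists_partition_preimage_of_bijOn {G G' : Type*} [Group G] [Group G']
    (f : G →* G') [Finite f.ker] {T' : Subgroup G} {T : Subgroup G'}
    (h : Set.BijOn f T' T) :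
    ∃ C : Finset (Set G), C.card = Nat.card f.ker ∧
      (∀ s ∈ C, ∃ k ∈ f.ker, s = k • (T' : Set G)) ∧
      (C : Set (Set G)).Pairwise Disjoint ∧ ⋃₀ (C : Set (Set G)) = f ⁻¹' T := by
  classical
  have hdisj : Disjoint f.ker T' := Subgroup.disjoint_def.mpr fun hxK hxT =>
    (Set.injOn_iff_map_eq_one f T').mp h.injOn _ hxT hxK
  refine ⟨(f.ker : Set G).toFinite.toFinset.image (· • (T' : Set G)), ?_, ?_, ?_, ?_⟩
  · rw [Finset.card_image_of_injOn (by simpa using Subgroup.injOn_smul_coe_iff_disjoint.mpr hdisj)]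
    exact (Set.ncard_eq_toFinset_card _ _).symm
  · intro s hs
    obtain ⟨k, hk, rfl⟩ := Finset.mem_image.mp hs
    exact ⟨k, by simpa using hk, rfl⟩
  · rintro _ hs _ hs' hne
    obtain ⟨k, -, rfl⟩ := Finset.mem_image.mp hs
    obtain ⟨k', -, rfl⟩ := Finset.mem_image.mp hs'
    exact Subgroup.disjoint_smul_coe_of_ne hne
  · rw [← h.image_eq, f.preimage_image_eq_iUnion_smul, Finset.coe_image, Set.sUnion_image]
    simp

/-- The sets of `C` pick out distinct cosets `k • T`, `k ∈ K`, of which there are fewer than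
`|K|` unless `K ⊓ T = ⊥`. -/
theorem Subgroup.disjoint_of_card_le {K T : Subgroup G} [Finite K] {C : Finset (Set G)}
    (hC : (C : Set (Set G)).Pairwise Disjoint) (hcoset : ∀ P ∈ C, ∃ k ∈ K, k • (T : Set G) ⊆ P)
    (hcard : Nat.card K ≤ C.card) : Disjoint K T := by
  classical
  set K' := (K : Set G).toFinite.toFinset
  choose! k hkK hkP using hcoset
  have hC_le : C.card ≤ (K'.image (· • (T : Set G))).card := by
    refine Finset.card_le_card_of_injOn (fun P => k P • (T : Set G))
      (fun P hP => Finset.mem_image_of_mem _ (by simpa [K'] using hkK P hP)) ?_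
    intro P hP Q hQ hPQ
    by_contra hne
    have hkQ : k P ∈ k Q • (T : Set G) := by
      rw [← show k P • (T : Set G) = k Q • T from hPQ]
      exact mem_own_leftCoset T.toSubmonoid (k P)
    exact Set.disjoint_left.mp (hC hP hQ hne) (hkP P hP (mem_own_leftCoset T.toSubmonoid _))
      (hkP Q hQ hkQ)
  have hK' : K'.card = Nat.card K := (Set.ncard_eq_toFinset_card _ _).symm
  have hinj : Set.InjOn (· • (T : Set G)) (K' : Set G) :=
    Finset.card_image_iff.mp (le_antisymm Finset.card_image_le (by omega))
  rw [← injOn_smul_coe_iff_disjoint]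
  simpa [K'] using hinj

end Cosets

theorem Subgroup.eq_top_of_finiteIndex {G : Type*} [CommGroup G] [RootableBy G ℕ]
    (S : Subgroup G) [S.FiniteIndex] : S = ⊤ :=
  S.eq_top_iff'.mpr fun x =>
    RootableBy.root_cancel x (FiniteIndex.index_ne_zero : S.index ≠ 0) ▸ S.pow_index_mem _

theorem Subgroup.exists_smul_subset_of_smul_subset_iUnion {G : Type*} [CommGroup G]
    {D : Subgroup G} [RootableBy D ℕ] {ι : Type*} {s : Finset ι} {S : ι → Subgroup G}
    {b : ι → G} {x : G} (h : x • (D : Set G) ⊆ ⋃ i ∈ s, b i • (S i : Set G)) :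
    ∃ i ∈ s, x • (D : Set G) ⊆ b i • (S i : Set G) := by
  classical
  let s' := s.filter fun i => ∃ d : D, x * d ∈ b i • (S i : Set G)
  choose! d hd using fun i (hi : i ∈ s') => (Finset.mem_filter.mp hi).2
  -- Neumann's lemma: in a finite cover of `D` by cosets, some subgroup has finite index
  have hcover : ⋃ i ∈ s', d i • ((S i).subgroupOf D : Set D) = Set.univ := by
    refine Set.eq_univ_of_forall fun y => ?_
    obtain ⟨i, hi, hy⟩ : ∃ i ∈ s, x * y ∈ b i • (S i : Set G) := by
      simpa using h (Set.smul_mem_smul_set (a := x) y.2)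
    have hi' : i ∈ s' := Finset.mem_filter.mpr ⟨hi, y, hy⟩
    refine Set.mem_biUnion hi' ((mem_leftCoset_iff _).mpr ?_)
    have := (leftCoset_eq_iff (S i)).mp
      ((smul_coe_eq_of_mem_smul (hd i hi')).trans (smul_coe_eq_of_mem_smul hy).symm)
    simpa [Subgroup.mem_subgroupOf, mul_assoc] using this
  obtain ⟨j, hj, hfin⟩ := exists_finiteIndex_of_leftCoset_cover hcover
  have hDS : D ≤ S j := subgroupOf_eq_top.mp ((S j).subgroupOf D).eq_top_of_finiteIndex
  refine ⟨j, (Finset.mem_filter.mp hj).1, ?_⟩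
  calc x • (D : Set G) = (x * d j) • (D : Set G) := by
        rw [mul_smul, leftCoset_mem_leftCoset D (d j).2]
    _ ⊆ (x * d j) • (S j : Set G) := Set.smul_set_mono hDS
    _ = b j • (S j : Set G) := smul_coe_eq_of_mem_smul (hd j hj)

noncomputable instance {K : Type*} [Field K] [IsAlgClosed K] : RootableBy Kˣ ℕ :=
  rootableByOfPowLeftSurj _ _ fun hd w => by
    obtain ⟨z, hz⟩ := IsAlgClosed.exists_pow_nat_eq (w : K) (Nat.pos_of_ne_zero hd)
    have hz0 : z ≠ 0 := by
      rintro rfl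
      exact w.ne_zero (by simpa [zero_pow hd] using hz.symm)
    exact ⟨Units.mk0 z hz0, Units.ext (by simpa using hz)⟩

theorem zpow_sum {G : Type*} [CommGroup G] (x : G) {ι : Type*} (s : Finset ι) (f : ι → ℤ) :
    x ^ (∑ i ∈ s, f i) = ∏ i ∈ s, x ^ f i := by
  classical
  induction s using Finset.induction with
  | empty => simp
  | insert _ _ h ih => rw [Finset.sum_insert h, Finset.prod_insert h, zpow_add, ih]

section Monomial

variable {n : ℕ}

theorem monomialHom_mul_apply {k l : ℕ} (A : Matrix (Fin n) (Fin k) ℤ)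
    (B : Matrix (Fin k) (Fin l) ℤ) (t : Fin l → ℂˣ) :
    monomialHom (A * B) t = monomialHom A (monomialHom B t) := by
  funext i
  change ∏ m, t m ^ (A * B) i m = ∏ j, (∏ m, t m ^ B j m) ^ A i j
  simp only [Matrix.mul_apply, zpow_sum, ← Finset.prod_zpow, ← zpow_mul]
  rw [Finset.prod_comm]
  simp only [mul_comm]

theorem monomialHom_smul_one (d : ℤ) (t : Fin n → ℂˣ) :
    monomialHom (d • (1 : Matrix (Fin n) (Fin n) ℤ)) t = t ^ d := by
  funext i
  change ∏ j, t j ^ (d • (1 : Matrix (Fin n) (Fin n) ℤ)) i j = t i ^ d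
  simp [Matrix.one_apply]

theorem monomialHom_surjective {M : Matrix (Fin n) (Fin n) ℤ} (hM : M.det ≠ 0) :
    Function.Surjective (monomialHom M) := by
  let := Group.rootableByIntOfRootableByNat ℂˣ
  intro y
  obtain ⟨s, hs⟩ := RootableBy.surjective_pow (Fin n → ℂˣ) ℤ hM y
  refine ⟨monomialHom M.adjugate s, ?_⟩
  rw [← monomialHom_mul_apply, Matrix.mul_adjugate, monomialHom_smul_one]
  exact hs

theorem pow_natAbs_det_eq_one_of_mem_ker {M : Matrix (Fin n) (Fin n) ℤ} {t : Fin n → ℂˣ}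
    (ht : t ∈ (monomialHom M).ker) : t ^ M.det.natAbs = 1 := by
  have h : monomialHom (M.adjugate * M) t = 1 := by
    rw [monomialHom_mul_apply, MonoidHom.mem_ker.mp ht, map_one]
  rw [Matrix.adjugate_mul, monomialHom_smul_one] at h
  exact pow_natAbs_eq_one.mpr h

theorem finite_ker_monomialHom {M : Matrix (Fin n) (Fin n) ℤ} (hM : M.det ≠ 0) :
    Finite (monomialHom M).ker := by
  have : NeZero M.det.natAbs := ⟨Int.natAbs_ne_zero.mpr hM⟩
  refine Finite.of_injective (β := Fin n → rootsOfUnity M.det.natAbs ℂ)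
    (fun t i => ⟨t.1 i, (mem_rootsOfUnity _ _).mpr
      (congrFun (pow_natAbs_det_eq_one_of_mem_ker t.2) i)⟩) fun t t' h => ?_
  exact Subtype.ext (funext fun i => congrArg Subtype.val (congrFun h i))

theorem IsSubtorus.surjective_pow {T : Subgroup (Fin n → ℂˣ)} (hT : IsSubtorus T) {d : ℕ}
    (hd : d ≠ 0) : Function.Surjective fun x : T => x ^ d := by
  obtain ⟨k, A, rfl⟩ := hT
  let := (monomialHom A).rangeRestrict_surjective.rootableBy _ fun a d => map_pow _ a d
  exact RootableBy.surjective_pow _ _ hd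

end Monomial

section Partition

variable {n : ℕ} {M : Matrix (Fin n) (Fin n) ℤ} {T : Subgroup (Fin n → ℂˣ)}
  {C : Finset (Set (Fin n → ℂˣ))} {ζ : Set (Fin n → ℂˣ) → Fin n → ℂˣ}
  {S : Set (Fin n → ℂˣ) → Subgroup (Fin n → ℂˣ)}

theorem le_comap_of_partition (hCS : ∀ P ∈ C, P = ζ P • (S P : Set (Fin n → ℂˣ)))
    (hunion : ⋃₀ (C : Set (Set (Fin n → ℂˣ))) = monomialHom M ⁻¹' T) {P : Set (Fin n → ℂˣ)}
    (hP : P ∈ C) : S P ≤ T.comap (monomialHom M) :=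
  Subgroup.le_of_smul_coe_subset (hCS P hP ▸ hunion ▸ Set.subset_sUnion_of_mem hP)

theorem exists_map_eq_of_partition (hM : M.det ≠ 0) (hT : IsSubtorus T)
    (hCS : ∀ P ∈ C, P = ζ P • (S P : Set (Fin n → ℂˣ)))
    (hunion : ⋃₀ (C : Set (Set (Fin n → ℂˣ))) = monomialHom M ⁻¹' T) :
    ∃ P ∈ C, (S P).map (monomialHom M) = T := by
  set f := monomialHom M
  have hcover : (1 : Fin n → ℂˣ) • (T : Set (Fin n → ℂˣ)) ⊆
      ⋃ P ∈ C, f (ζ P) • ((S P).map f : Set (Fin n → ℂˣ)) := by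
    rintro _ ⟨x, hx, rfl⟩
    obtain ⟨u, rfl⟩ := monomialHom_surjective hM x
    obtain ⟨P, hP, huP⟩ : ∃ P ∈ C, u ∈ P := by
      simpa using (hunion.symm ▸ hx : u ∈ ⋃₀ (C : Set (Set (Fin n → ℂˣ))))
    rw [hCS P hP] at huP
    obtain ⟨s, hs, rfl⟩ := huP
    exact Set.mem_biUnion hP ⟨f s, ⟨s, hs, rfl⟩, by simp [f]⟩
  let := rootableByOfPowLeftSurj _ _ hT.surjective_pow
  obtain ⟨P, hP, hTsub⟩ := Subgroup.exists_smul_subset_of_smul_subset_iUnion hcover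
  rw [← Subgroup.smul_coe_eq_of_mem_smul (hTsub (mem_own_leftCoset T.toSubmonoid 1))] at hTsub
  refine ⟨P, hP, le_antisymm (Subgroup.map_le_iff_le_comap.mpr
    (le_comap_of_partition hCS hunion hP)) ?_⟩
  simpa only [one_smul, Subgroup.coe_map, ← Subgroup.coe_map, SetLike.coe_subset_coe] using hTsub

theorem exists_ker_smul_subset_of_partition {T' : Subgroup (Fin n → ℂˣ)} (hT' : IsSubtorus T')
    (hmap : T'.map (monomialHom M) = T) (hCS : ∀ P ∈ C, P = ζ P • (S P : Set (Fin n → ℂˣ)))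
    (hdisj : (C : Set (Set (Fin n → ℂˣ))).Pairwise Disjoint)
    (hunion : ⋃₀ (C : Set (Set (Fin n → ℂˣ))) = monomialHom M ⁻¹' T) {P : Set (Fin n → ℂˣ)}
    (hP : P ∈ C) : ∃ k ∈ (monomialHom M).ker, k • (T' : Set (Fin n → ℂˣ)) ⊆ P := by
  have hζP : ζ P ∈ P :=
    (Set.ext_iff.mp (hCS P hP) _).mpr (mem_own_leftCoset (S P).toSubmonoid _)
  have hζT : ζ P ∈ T.comap (monomialHom M) := by
    rw [← SetLike.mem_coe, Subgroup.coe_comap, ← hunion]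
    exact Set.mem_sUnion_of_mem hζP hP
  have hcover : ζ P • (T' : Set (Fin n → ℂˣ)) ⊆ ⋃ Q ∈ C, ζ Q • (S Q : Set (Fin n → ℂˣ)) :=
    calc ζ P • (T' : Set (Fin n → ℂˣ))
        ⊆ ζ P • (T.comap (monomialHom M) : Set (Fin n → ℂˣ)) :=
          Set.smul_set_mono (hmap ▸ Subgroup.le_comap_map _ T')
      _ = ⋃₀ (C : Set (Set (Fin n → ℂˣ))) := by
          rw [leftCoset_mem_leftCoset _ hζT, hunion, Subgroup.coe_comap]
      _ = ⋃ Q ∈ C, ζ Q • (S Q : Set (Fin n → ℂˣ)) := by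
          rw [Set.sUnion_eq_biUnion]
          exact Set.iUnion₂_congr hCS
  let := rootableByOfPowLeftSurj _ _ hT'.surjective_pow
  obtain ⟨Q, hQ, hsub⟩ := Subgroup.exists_smul_subset_of_smul_subset_iUnion hcover
  rw [← hCS Q hQ] at hsub
  have hQP : Q = P := by
    by_contra hne
    exact Set.disjoint_left.mp (hdisj hQ hP hne)
      (hsub (mem_own_leftCoset T'.toSubmonoid _)) hζP
  obtain ⟨t, ht, hft⟩ : monomialHom M (ζ P) ∈ T'.map (monomialHom M) := hmap ▸ hζT
  refine ⟨ζ P * t⁻¹, by simp [hft], ?_⟩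
  rw [Subgroup.smul_coe_eq_of_mem_smul ((mem_leftCoset_iff (ζ P)).mpr (by simpa using ht))]
  rwa [hQP] at hsub

theorem exists_subtorus_bijOn_of_partition (hM : M.det ≠ 0) (hT : IsSubtorus T)
    (hcard : C.card = Nat.card (monomialHom M).ker)
    (hC : ∀ P ∈ C, ∃ (ζ : Fin n → ℂˣ) (S : Subgroup (Fin n → ℂˣ)), IsSubtorus S ∧
      P = ζ • (S : Set (Fin n → ℂˣ)))
    (hdisj : (C : Set (Set (Fin n → ℂˣ))).Pairwise Disjoint)
    (hunion : ⋃₀ (C : Set (Set (Fin n → ℂˣ))) = monomialHom M ⁻¹' T) :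
    ∃ T' : Subgroup (Fin n → ℂˣ), IsSubtorus T' ∧
      Set.BijOn (monomialHom M) (T' : Set (Fin n → ℂˣ)) (T : Set (Fin n → ℂˣ)) := by
  choose! ζ S hS hCS using hC
  obtain ⟨P₀, hP₀, hmap⟩ := exists_map_eq_of_partition hM hT hCS hunion
  have := finite_ker_monomialHom hM
  have hker : Disjoint (monomialHom M).ker (S P₀) := Subgroup.disjoint_of_card_le hdisj
    (fun P hP => exists_ker_smul_subset_of_partition (hS P₀ hP₀) hmap hCS hdisj hunion hP)
    hcard.ge
  refine ⟨S P₀, hS P₀ hP₀, fun x hx => hmap ▸ Subgroup.mem_map_of_mem _ hx,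
    (Set.injOn_iff_map_eq_one _ _).mpr fun a ha hfa => Subgroup.disjoint_def.mp hker hfa ha, ?_⟩
  intro y hy
  rw [← hmap] at hy
  exact hy

end Partition

/-- For an isogeny `λ` of `G_m^n` (given by a nonsingular integer matrix `M`) and a
subtorus `T`, the following are equivalent: (1) `λ` restricts to an isomorphism from some
subtorus `T'` onto `T`; (2) `λ⁻¹(T)` is the disjoint union of `deg λ = #ker λ` distinct
torsion cosets. -/
theorem stmt_3 {n : ℕ} (M : Matrix (Fin n) (Fin n) ℤ) (hM : M.det ≠ 0)
    (T : Subgroup (Fin n → ℂˣ)) (hT : IsSubtorus T) :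
    (∃ T' : Subgroup (Fin n → ℂˣ), IsSubtorus T' ∧
        Set.BijOn (monomialHom M) (T' : Set (Fin n → ℂˣ)) (T : Set (Fin n → ℂˣ))) ↔
      (∃ C : Finset (Set (Fin n → ℂˣ)), C.card = Nat.card (monomialHom M).ker ∧
        (∀ s ∈ C, IsTorsionCoset s) ∧
        (∀ s ∈ C, ∀ s' ∈ C, s ≠ s' → Disjoint s s') ∧
        ⋃₀ (C : Set (Set (Fin n → ℂˣ))) =
          (monomialHom M) ⁻¹' (T : Set (Fin n → ℂˣ))) := by
  constructor
  · rintro ⟨T', hT', hbij⟩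
    have := finite_ker_monomialHom hM
    obtain ⟨C, hcard, hcoset, hdisj, hunion⟩ :=
      (monomialHom M).exists_partition_preimage_of_bijOn hbij
    refine ⟨C, hcard, fun s hs => ?_, hdisj, hunion⟩
    obtain ⟨k, hk, rfl⟩ := hcoset s hs
    exact ⟨k, T', hT', ⟨_, Int.natAbs_pos.mpr hM, pow_natAbs_det_eq_one_of_mem_ker hk⟩, rfl⟩
  · rintro ⟨C, hcard, htors, hdisj, hunion⟩
    refine exists_subtorus_bijOn_of_partition hM hT hcard (fun P hP => ?_) hdisj hunion
    obtain ⟨ζ, S, hS, -, rfl⟩ := htors P hP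
    exact ⟨ζ, S, hS, rfl⟩
end

section
/- Let F = x₁ + x₂ − 2 ∈ ℚ[x₁^{±1}, x₂^{±1}]. For every nonsingular matrix M = (m_{i,j}) ∈ ℤ^{2×2}, the Laurent polynomial F(x^M) = x₁^{m_{1,1}}x₂^{m_{1,2}} + x₁^{m_{2,1}}x₂^{m_{2,2}} − 2 is irreducible in ℚ[x₁^{±1}, x₂^{±1}]; moreover, for every nonzero a ∈ ℤ², the polynomial t − 1 divides F(t^{a₁}, t^{a₂}) = t^{a₁} + t^{a₂} − 2 in ℚ[t^{±1}]. -/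
/-!
After a unimodular change of exponent coordinates, which is an automorphism of the Laurent ring,
the two exponent vectors become `(0, g)` and `(q, -m)` with `g, q > 0`, `m ≥ 0`. The Laurent
polynomial is then the unit `x₂^{-m}` times `P = x₁^q + x₂^m (x₂^g - 2)`, which is Eisenstein in
`x₁` at a prime factor of the separable polynomial `x₂^g - 2`. A prime of `ℚ[x₁, x₂]` dividing no
variable stays prime in the Laurent ring, because that ring is the localization of `ℚ[x₁, x₂]` at
the monomials.
-/

open scoped Polynomial

namespace Polynomial

variable {R : Type*} [CommRing R] [IsDomain R]

theorem irreducible_X_pow_add_C_of_prime_dvd {π ρ : R} (hπ : Prime π) (hρ : π ∣ ρ)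
    (hρ2 : ¬ π ^ 2 ∣ ρ) {q : ℕ} (hq : q ≠ 0) : Irreducible (X ^ q + C ρ) := by
  have hmonic := monic_X_pow_add_C ρ hq
  have hdeg : (X ^ q + C ρ).natDegree = q := natDegree_X_pow_add_C
  refine IsEisensteinAt.irreducible (𝓟 := Ideal.span {π})
    (hmonic.isEisensteinAt_of_mem_of_notMem ?_ ?_ ?_)
    ((Ideal.span_singleton_prime hπ.ne_zero).mpr hπ) hmonic.isPrimitive (by omega)
  · exact Ideal.span_singleton_eq_top.not.mpr hπ.not_isUnit
  · intro n hn
    rw [hdeg] at hn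
    rw [coeff_add, coeff_X_pow, if_neg hn.ne, coeff_C, zero_add]
    split_ifs
    · exact Ideal.mem_span_singleton.mpr hρ
    · exact Ideal.zero_mem _
  · rwa [coeff_add, coeff_X_pow, if_neg (Ne.symm hq), coeff_C_zero, zero_add,
      Ideal.span_singleton_pow, Ideal.mem_span_singleton]

theorem X_pow_add_C_not_dvd_C {ρ a : R} {q : ℕ} (hq : q ≠ 0) (ha : a ≠ 0) :
    ¬ (X ^ q + C ρ) ∣ C a := fun h => by
  have := natDegree_le_of_dvd h (C_ne_zero.mpr ha)
  rw [natDegree_X_pow_add_C, natDegree_C] at this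
  omega

theorem X_pow_add_C_not_dvd_X {ρ : R} {q : ℕ} (hq : q ≠ 0) (hρ : ρ ≠ 0) :
    ¬ (X ^ q + C ρ) ∣ X := fun h =>
  X_pow_add_C_not_dvd_C hq hρ <| by simpa using dvd_sub dvd_rfl (dvd_pow h hq)

variable {K : Type*} [Field K]

theorem exists_prime_dvd_X_pow_mul_X_pow_sub_C {g : ℕ} (hg : (g : K) ≠ 0) {c : K} (hc : c ≠ 0)
    (m : ℕ) :
    ∃ π : K[X], Prime π ∧ π ∣ X ^ m * (X ^ g - C c) ∧ ¬ π ^ 2 ∣ X ^ m * (X ^ g - C c) := by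
  have hg0 : g ≠ 0 := by rintro rfl; simp at hg
  obtain ⟨π, hπ, hπdvd⟩ := WfDvdMonoid.exists_irreducible_factor
    (fun h => by simpa [natDegree_X_pow_sub_C, hg0] using natDegree_eq_zero_of_isUnit h)
    (X_pow_sub_C_ne_zero (Nat.pos_of_ne_zero hg0) c)
  have hπX : ¬ π ∣ X ^ m := fun h => hπ.not_isUnit <| isUnit_of_dvd_unit
    (by simpa using dvd_sub (dvd_pow (hπ.prime.dvd_of_dvd_pow h) hg0) hπdvd)
    (isUnit_C.mpr hc.isUnit)
  refine ⟨π, hπ.prime, hπdvd.mul_left _, fun h => hπ.not_isUnit ?_⟩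
  exact (separable_X_pow_sub_C c hg hc).squarefree π
    (by simpa [sq] using hπ.prime.pow_dvd_of_dvd_mul_left 2 hπX h)

end Polynomial

namespace MvPolynomial

section FinTwo

variable (K : Type*) [CommSemiring K]

noncomputable def finTwoAlgEquiv : MvPolynomial (Fin 2) K ≃ₐ[K] K[X][X] :=
  (finSuccEquiv K 1).trans (Polynomial.mapAlgEquiv (uniqueAlgEquiv K (Fin 1)))

theorem finTwoAlgEquiv_X_zero : finTwoAlgEquiv K (X 0) = Polynomial.X := by
  rw [finTwoAlgEquiv, AlgEquiv.trans_apply, finSuccEquiv_X_zero, Polynomial.coe_mapAlgEquiv,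
    Polynomial.map_X]

theorem finTwoAlgEquiv_X_one : finTwoAlgEquiv K (X 1) = Polynomial.C Polynomial.X := by
  rw [finTwoAlgEquiv, AlgEquiv.trans_apply, ← Fin.succ_zero_eq_one, finSuccEquiv_X_succ,
    Polynomial.coe_mapAlgEquiv, Polynomial.map_C]
  simp

theorem finTwoAlgEquiv_C (c : K) :
    finTwoAlgEquiv K (C c) = Polynomial.C (Polynomial.C c) :=
  (finTwoAlgEquiv K).commutes c

end FinTwo

section Eisenstein

variable {K : Type*} [Field K] {g q : ℕ} {c : K}

theorem finTwoAlgEquiv_X_pow_add_X_pow_mul_X_pow_sub_C (m : ℕ) :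
    finTwoAlgEquiv K (X 0 ^ q + X 1 ^ m * (X 1 ^ g - C c))
      = Polynomial.X ^ q
        + Polynomial.C (Polynomial.X ^ m * (Polynomial.X ^ g - Polynomial.C c)) := by
  simp [finTwoAlgEquiv_X_zero, finTwoAlgEquiv_X_one, finTwoAlgEquiv_C]

theorem prime_X_pow_add_X_pow_mul_X_pow_sub_C (hg : (g : K) ≠ 0) (hc : c ≠ 0) (hq : q ≠ 0)
    (m : ℕ) : Prime (X 0 ^ q + X 1 ^ m * (X 1 ^ g - C c) : MvPolynomial (Fin 2) K) := by
  obtain ⟨π, hπ, hρ, hρ2⟩ := Polynomial.exists_prime_dvd_X_pow_mul_X_pow_sub_C hg hc m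
  rw [← MulEquiv.prime_iff (finTwoAlgEquiv K), finTwoAlgEquiv_X_pow_add_X_pow_mul_X_pow_sub_C]
  exact (Polynomial.irreducible_X_pow_add_C_of_prime_dvd hπ hρ hρ2 hq).prime

theorem X_pow_add_X_pow_mul_X_pow_sub_C_not_dvd_X (hg : g ≠ 0) (hq : q ≠ 0) (m : ℕ) (i : Fin 2) :
    ¬ (X 0 ^ q + X 1 ^ m * (X 1 ^ g - C c) : MvPolynomial (Fin 2) K) ∣ X i := by
  have hρ : (Polynomial.X ^ m * (Polynomial.X ^ g - Polynomial.C c) : K[X]) ≠ 0 :=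
    mul_ne_zero (pow_ne_zero _ Polynomial.X_ne_zero)
      (Polynomial.X_pow_sub_C_ne_zero (Nat.pos_of_ne_zero hg) c)
  rw [← map_dvd_iff (finTwoAlgEquiv K), finTwoAlgEquiv_X_pow_add_X_pow_mul_X_pow_sub_C]
  fin_cases i
  · rw [Fin.zero_eta, finTwoAlgEquiv_X_zero]
    exact Polynomial.X_pow_add_C_not_dvd_X hq hρ
  · rw [Fin.mk_one, finTwoAlgEquiv_X_one]
    exact Polynomial.X_pow_add_C_not_dvd_C hq Polynomial.X_ne_zero

end Eisenstein

section Laurent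

open AddMonoidAlgebra

variable {σ k : Type*} [CommSemiring k]

theorem _root_.AddMonoidAlgebra.isUnit_single_one {G : Type*} [AddGroup G] (w : G) :
    IsUnit (single w (1 : k)) :=
  (Group.isUnit (Multiplicative.ofAdd w)).map (of k G)

def natExponentToInt : (σ →₀ ℕ) →+ (σ → ℤ) where
  toFun n i := n i
  map_zero' := by ext; simp
  map_add' _ _ := by ext; simp

theorem natExponentToInt_injective : Function.Injective (natExponentToInt (σ := σ)) :=
  fun _ _ h => Finsupp.ext fun i => by simpa [natExponentToInt] using congrFun h i

theorem exists_natExponentToInt_sub_eq [Finite σ] (w : σ → ℤ) :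
    ∃ a b : σ →₀ ℕ, natExponentToInt a - natExponentToInt b = w :=
  ⟨Finsupp.equivFunOnFinite.symm fun i => (w i).toNat,
    Finsupp.equivFunOnFinite.symm fun i => (-w i).toNat, by ext i; simp [natExponentToInt]⟩

theorem natExponentToInt_single [DecidableEq σ] (i : σ) (n : ℕ) :
    natExponentToInt (Finsupp.single i n) = Pi.single i (n : ℤ) := by
  ext j; by_cases h : j = i <;> simp [natExponentToInt, h]

variable (k) in
noncomputable def toLaurent : MvPolynomial σ k →+* AddMonoidAlgebra k (σ → ℤ) :=
  mapDomainRingHom k natExponentToInt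

theorem toLaurent_injective : Function.Injective (toLaurent (σ := σ) k) :=
  mapDomain_injective natExponentToInt_injective

theorem toLaurent_monomial (n : σ →₀ ℕ) (c : k) :
    toLaurent k (monomial n c) = single (natExponentToInt n) c :=
  mapDomain_single

theorem isUnit_toLaurent_monomial_one (n : σ →₀ ℕ) :
    IsUnit (toLaurent k (monomial n (1 : k))) := by
  rw [toLaurent_monomial]
  exact isUnit_single_one _

theorem exists_toLaurent_monomial_mul_eq [Finite σ] (r : AddMonoidAlgebra k (σ → ℤ)) :
    ∃ n Q, toLaurent k (monomial n 1) * r = toLaurent k Q := by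
  induction r using AddMonoidAlgebra.induction_linear with
  | zero => exact ⟨0, 0, by simp⟩
  | add r s hr hs =>
    obtain ⟨n, Q, hQ⟩ := hr
    obtain ⟨n', Q', hQ'⟩ := hs
    refine ⟨n + n', monomial n' 1 * Q + monomial n 1 * Q', ?_⟩
    have hmul : monomial (n + n') (1 : k) = monomial n 1 * monomial n' 1 := by
      rw [monomial_mul, one_mul]
    rw [map_add, map_mul, map_mul, ← hQ, ← hQ', hmul, map_mul]
    ring
  | single w c =>
    obtain ⟨a, b, rfl⟩ := exists_natExponentToInt_sub_eq w
    exact ⟨b, monomial a c, by simp [toLaurent_monomial, single_mul_single]⟩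

theorem _root_.Prime.not_dvd_monomial_one {P : MvPolynomial σ k} (hP : Prime P)
    (hX : ∀ i, ¬ P ∣ X i) (n : σ →₀ ℕ) : ¬ P ∣ monomial n 1 := by
  rw [monomial_eq, C_1, one_mul]
  exact hP.not_dvd_finsetProd fun i _ h => hX i (hP.dvd_of_dvd_pow h)

variable [Finite σ] {P : MvPolynomial σ k}

theorem dvd_of_toLaurent_dvd_toLaurent (hP : Prime P) (hX : ∀ i, ¬ P ∣ X i)
    {Z : MvPolynomial σ k} (h : toLaurent k P ∣ toLaurent k Z) : P ∣ Z := by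
  obtain ⟨r, hr⟩ := h
  obtain ⟨n, H, hH⟩ := exists_toLaurent_monomial_mul_eq r
  have hZ : monomial n 1 * Z = P * H := toLaurent_injective <| by
    rw [map_mul, map_mul, hr, ← hH]; ring
  exact (hP.dvd_or_dvd ⟨H, hZ⟩).resolve_left (hP.not_dvd_monomial_one hX n)

theorem prime_toLaurent (hP : Prime P) (hX : ∀ i, ¬ P ∣ X i) : Prime (toLaurent k P) := by
  refine ⟨fun h => hP.ne_zero (toLaurent_injective (h.trans (map_zero _).symm)),
    fun h => hP.not_isUnit (isUnit_of_dvd_one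
      (dvd_of_toLaurent_dvd_toLaurent hP hX (by rw [map_one]; exact h.dvd))),
    fun s t h => ?_⟩
  obtain ⟨n, S, hS⟩ := exists_toLaurent_monomial_mul_eq s
  obtain ⟨n', T, hT⟩ := exists_toLaurent_monomial_mul_eq t
  have hST : P ∣ S * T := dvd_of_toLaurent_dvd_toLaurent hP hX <| by
    rw [map_mul, ← hS, ← hT, mul_mul_mul_comm]; exact h.mul_left _
  rcases hP.dvd_or_dvd hST with hS' | hT'
  · exact .inl <| (isUnit_toLaurent_monomial_one n).dvd_mul_left.mp (hS ▸ map_dvd _ hS')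
  · exact .inr <| (isUnit_toLaurent_monomial_one n').dvd_mul_left.mp (hT ▸ map_dvd _ hT')

theorem single_mul_toLaurent_X_pow_add_X_pow_mul_X_pow_sub_C {K : Type*} [CommRing K]
    (q m g : ℕ) (c : K) :
    single ![0, -(m : ℤ)] 1 * toLaurent K (X 0 ^ q + X 1 ^ m * (X 1 ^ g - C c))
      = single ![0, (g : ℤ)] 1 + single ![(q : ℤ), -m] 1 - single 0 c := by
  have hmon : (X 0 ^ q + X 1 ^ m * (X 1 ^ g - C c) : MvPolynomial (Fin 2) K)
      = monomial (Finsupp.single 0 q) 1 + (monomial (Finsupp.single 1 (m + g)) 1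
        - monomial (Finsupp.single 1 m) c) := by
    simp only [X_pow_eq_monomial, mul_sub, monomial_mul, ← Finsupp.single_add,
      mul_comm _ (C c), C_mul_monomial, mul_one]
  have h₀ : ![0, -(m : ℤ)] + Pi.single 0 (q : ℤ) = ![(q : ℤ), -m] := by
    ext i; fin_cases i <;> simp
  have h₁ : ![0, -(m : ℤ)] + Pi.single 1 ((m + g : ℕ) : ℤ) = ![0, (g : ℤ)] := by
    ext i; fin_cases i <;> simp
  have h₂ : ![0, -(m : ℤ)] + Pi.single 1 (m : ℤ) = 0 := by
    ext i; fin_cases i <;> simp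
  rw [hmon, map_add, map_sub, toLaurent_monomial, toLaurent_monomial, toLaurent_monomial,
    natExponentToInt_single, natExponentToInt_single, natExponentToInt_single, mul_add, mul_sub,
    single_mul_single, single_mul_single, single_mul_single, h₀, h₁, h₂, one_mul, one_mul]
  abel

end Laurent

end MvPolynomial

open Matrix in
theorem exists_addEquiv_map_eq_normal_form (u v : Fin 2 → ℤ) (huv : u 0 * v 1 - u 1 * v 0 ≠ 0) :
    ∃ (e : (Fin 2 → ℤ) ≃+ (Fin 2 → ℤ)) (g q m : ℕ), 0 < g ∧ 0 < q ∧
      e u = ![0, (g : ℤ)] ∧ e v = ![(q : ℤ), -m] := by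
  obtain ⟨g, a, b, hg, hab, ha, hb⟩ := Int.exists_gcd_one' (m := u 0) (n := u 1) <|
    Int.gcd_pos_iff.mpr (by by_contra! h; exact huv (by simp [h.1, h.2]))
  obtain ⟨s, t, hst⟩ := Int.isCoprime_iff_gcd_eq_one.mpr hab
  set q₀ := a * v 1 - b * v 0
  set p₀ := s * v 0 + t * v 1
  have hq₀ : q₀ ≠ 0 := fun h => huv (by rw [ha, hb]; linear_combination (g : ℤ) * h)
  set σ := q₀.sign
  have hσ : σ * σ = 1 := by
    rcases hq₀.lt_or_gt with h | h
    · simp [σ, Int.sign_eq_neg_one_of_neg h]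
    · simp [σ, Int.sign_eq_one_of_pos h]
  -- The first row of `U` kills `u`; the shear `k` makes the second coordinate of `U v` nonpositive.
  set k := -|p₀|
  set U : Matrix (Fin 2) (Fin 2) ℤ := !![-σ * b, σ * a; s - k * σ * b, t + k * σ * a]
  have hU : IsUnit U.det := by
    have hdet : U.det = -σ := by
      simp only [U, det_fin_two_of]; linear_combination (-σ) * hst
    rw [hdet, IsUnit.neg_iff]; exact IsUnit.of_mul_eq_one _ hσ
  refine ⟨(toLinearEquiv' U (invertibleOfIsUnitDet U hU)).toAddEquiv, g, q₀.natAbs,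
    (|p₀| * q₀.natAbs - p₀).toNat, hg, Int.natAbs_pos.mpr hq₀, ?_, ?_⟩
  · ext i; fin_cases i <;> simp [U, mulVec, dotProduct, Fin.sum_univ_two, ha, hb]
    · ring
    · linear_combination (g : ℤ) * hst
  · have hσq₀ : σ * q₀ = |q₀| := Int.sign_mul_self_eq_abs q₀
    have hm : 0 ≤ |p₀| * |q₀| - p₀ := by
      nlinarith [abs_nonneg p₀, le_abs_self p₀, Int.one_le_abs hq₀]
    ext i; fin_cases i <;> simp [U, mulVec, dotProduct, Fin.sum_univ_two, max_eq_left hm]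
    · linear_combination hσq₀
    · linear_combination k * hσq₀

open AddMonoidAlgebra MvPolynomial in
theorem irreducible_single_add_single_sub_single {K : Type*} [Field K] [CharZero K] {c : K}
    (hc : c ≠ 0) {u v : Fin 2 → ℤ} (huv : u 0 * v 1 - u 1 * v 0 ≠ 0) :
    Irreducible (single u 1 + single v 1 - single 0 c : AddMonoidAlgebra K (Fin 2 → ℤ)) := by
  obtain ⟨e, g, q, m, hg, hq, heu, hev⟩ := exists_addEquiv_map_eq_normal_form u v huv
  have hP : domCongr K K e (single u 1 + single v 1 - single 0 c)
      = single ![0, -(m : ℤ)] 1 * toLaurent K (X 0 ^ q + X 1 ^ m * (X 1 ^ g - C c)) := by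
    rw [single_mul_toLaurent_X_pow_add_X_pow_mul_X_pow_sub_C, map_sub, map_add, domCongr_single,
      domCongr_single, domCongr_single, heu, hev, map_zero]
  have hgK : (g : K) ≠ 0 := Nat.cast_ne_zero.mpr hg.ne'
  rw [← MulEquiv.irreducible_iff (domCongr K K e), hP, irreducible_isUnit_mul (isUnit_single_one _)]
  exact (prime_toLaurent (prime_X_pow_add_X_pow_mul_X_pow_sub_C hgK hc hq.ne' m)
    (X_pow_add_X_pow_mul_X_pow_sub_C_not_dvd_X hg.ne' hq.ne' m)).irreducible

namespace LaurentPolynomial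

theorem T_one_sub_one_dvd_T_sub_one {R : Type*} [CommRing R] (n : ℤ) :
    (T 1 - 1 : R[T;T⁻¹]) ∣ T n - 1 := by
  have hnat (k : ℕ) : (T 1 - 1 : R[T;T⁻¹]) ∣ T k - 1 := by
    simpa [T_pow] using sub_dvd_pow_sub_pow (T 1 : R[T;T⁻¹]) 1 k
  obtain ⟨k, rfl | rfl⟩ := Int.eq_nat_or_neg n
  · exact hnat k
  · have h : (T (-k) - 1 : R[T;T⁻¹]) = -T (-k) * (T k - 1) := by
      rw [mul_sub, neg_mul, ← T_add, neg_add_cancel, T_zero]; ring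
    exact h ▸ (hnat k).mul_left _

end LaurentPolynomial

theorem stmt_7_general (M : Matrix (Fin 2) (Fin 2) ℤ) (hM : M.det ≠ 0)
    (a : Fin 2 → ℤ) :
    Irreducible ((AddMonoidAlgebra.single (fun j => M 0 j) 1
        + AddMonoidAlgebra.single (fun j => M 1 j) 1
        - AddMonoidAlgebra.single 0 2 : AddMonoidAlgebra ℚ (Fin 2 → ℤ))) ∧
    (LaurentPolynomial.T 1 - 1 : LaurentPolynomial ℚ) ∣
      (LaurentPolynomial.T (a 0) + LaurentPolynomial.T (a 1) - 2) := by
  rw [Matrix.det_fin_two] at hM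
  refine ⟨irreducible_single_add_single_sub_single two_ne_zero hM, ?_⟩
  rw [show (LaurentPolynomial.T (a 0) + LaurentPolynomial.T (a 1) - 2 : LaurentPolynomial ℚ)
    = (LaurentPolynomial.T (a 0) - 1) + (LaurentPolynomial.T (a 1) - 1) by ring]
  exact dvd_add (LaurentPolynomial.T_one_sub_one_dvd_T_sub_one _)
    (LaurentPolynomial.T_one_sub_one_dvd_T_sub_one _)

/-- For `F = x₁ + x₂ − 2 ∈ ℚ[x₁^{±1}, x₂^{±1}]` and any nonsingular `M ∈ ℤ^{2×2}`, the
pullback `F(x^M) = x^{M 0} + x^{M 1} − 2` is irreducible in the Laurent polynomial ring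
`AddMonoidAlgebra ℚ (Fin 2 → ℤ)`; moreover, for every nonzero `a ∈ ℤ²`, `t − 1` divides
`t^{a₁} + t^{a₂} − 2` in `ℚ[t^{±1}]`. -/
theorem stmt_7 (M : Matrix (Fin 2) (Fin 2) ℤ) (hM : M.det ≠ 0)
    (a : Fin 2 → ℤ) (ha : a ≠ 0) :
    Irreducible ((AddMonoidAlgebra.single (fun j => M 0 j) 1
        + AddMonoidAlgebra.single (fun j => M 1 j) 1
        - AddMonoidAlgebra.single 0 2 : AddMonoidAlgebra ℚ (Fin 2 → ℤ))) ∧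
    (LaurentPolynomial.T 1 - 1 : LaurentPolynomial ℚ) ∣
      (LaurentPolynomial.T (a 0) + LaurentPolynomial.T (a 1) - 2) :=
  stmt_7_general M hM a
end
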